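/- There is no simplicial map from the 1-skeleton of the input complex I (vertices V × {0,1,⊥}, simplices = injective first coordinates, with |V| = n+1 ≥ 2) to the output complex O (vertices V' × {0,1}, simplices = sets with distinct first coordinates and constant second coordinate) that sends the vertex (v, 1) to a vertex with second coordinate 1 and the vertex (w, ⊥) to a vertex with second coordinate 0, for some v, w ∈ V. -/
import Mathlib


/-- There is no simplicial map from the 1-skeleton of the input complex `I`
(vertices `Fin (n+1) × Option Bool`, simplices = injective first coordinates)
to the output complex `O` (vertices `Fin (n+1) × Bool`, simplices = distinct
first coordinates and constant second coordinate) sending `(v, 1)` to a vertex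
with second coordinate `1` and `(w, ⊥)` to a vertex with second coordinate `0`. -/
theorem stmt_7 (n : ℕ) (hn : 1 ≤ n) (v w : Fin (n + 1)) :
    ¬ ∃ f : Fin (n + 1) × Option Bool → Fin (n + 1) × Bool,
      (∀ x y : Fin (n + 1) × Option Bool, x.1 ≠ y.1 →
        (f x = f y ∨ ((f x).1 ≠ (f y).1 ∧ (f x).2 = (f y).2))) ∧
      (f (v, some true)).2 = true ∧ (f (w, none)).2 = false := by
  rintro ⟨f, hf, h1, h0⟩
  have key : ∀ x y : Fin (n + 1) × Option Bool, x.1 ≠ y.1 → (f x).2 = (f y).2 := by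
    intro x y hxy
    rcases hf x y hxy with h | ⟨_, h⟩
    · rw [h]
    · exact h
  by_cases hvw : v = w
  · obtain ⟨u, hu⟩ : ∃ u : Fin (n + 1), u ≠ v := by
      have : Nontrivial (Fin (n + 1)) := Fin.nontrivial_iff_two_le.mpr (by omega)
      exact exists_ne v
    have e1 : (f (v, some true)).2 = (f (u, none)).2 := key _ _ (by simpa using hu.symm)
    have e2 : (f (u, none)).2 = (f (w, none)).2 := key _ _ (by simpa [hvw] using hu)
    rw [e1, e2, h0] at h1
    exact Bool.false_ne_true h1
  · have e : (f (v, some true)).2 = (f (w, none)).2 := key _ _ (by simpa using hvw)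
    rw [e, h0] at h1
    exact Bool.false_ne_true h1
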